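/- arXiv:1901.09858 — 2 statements merged into one kernel-verified Lean document; each statement's English description precedes it below -/
import Mathlib

section
/- Let A be a d×k real matrix and let X, X' be n×d real matrices that differ in exactly one entry, with the entrywise L1 norm of X - X' at most 1. Then the entrywise L1 norm of XA - X'A is at most √k times the maximum over rows i of the Euclidean norm of the i-th row of A. -/
theorem l1_norm_mul_le_of_single_entry_diff
    (n d k : ℕ) (X X' : Matrix (Fin n) (Fin d) ℝ) (A : Matrix (Fin d) (Fin k) ℝ)
    (hdiff : ∃ i₀ j₀, X i₀ j₀ ≠ X' i₀ j₀ ∧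
      ∀ i j, (i, j) ≠ (i₀, j₀) → X i j = X' i j)
    (hl1 : ∑ i, ∑ j, |X i j - X' i j| ≤ 1) :
    ∑ i, ∑ j, |(X * A) i j - (X' * A) i j| ≤
      Real.sqrt k * ⨆ i : Fin d, Real.sqrt (∑ j, (A i j) ^ 2) := by
  obtain ⟨i₀, j₀, hne, heq⟩ := hdiff
  set δ := X i₀ j₀ - X' i₀ j₀ with hδdef
  have hδ : |δ| ≤ 1 := by
    refine le_trans ?_ hl1
    calc |δ| ≤ ∑ j, |X i₀ j - X' i₀ j| :=
          Finset.single_le_sum (f := fun j => |X i₀ j - X' i₀ j|)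
            (fun _ _ => abs_nonneg _) (Finset.mem_univ j₀)
      _ ≤ ∑ i, ∑ j, |X i j - X' i j| :=
          Finset.single_le_sum (f := fun i => ∑ j, |X i j - X' i j|)
            (fun _ _ => Finset.sum_nonneg fun _ _ => abs_nonneg _) (Finset.mem_univ i₀)
  have key : ∀ i j, (X * A) i j - (X' * A) i j =
      if i = i₀ then δ * A j₀ j else 0 := by
    intro i j
    simp only [Matrix.mul_apply, ← Finset.sum_sub_distrib, ← sub_mul]
    by_cases hi : i = i₀
    · rw [if_pos hi, Finset.sum_eq_single j₀]
      · rw [hi]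
      · intro l _ hl
        rw [heq i l (by simp [Prod.ext_iff, hl]), sub_self, zero_mul]
      · simp
    · rw [if_neg hi]
      apply Finset.sum_eq_zero
      intro l _
      rw [heq i l (by simp [hi]), sub_self, zero_mul]
  have hsum : ∑ i, ∑ j, |(X * A) i j - (X' * A) i j| = ∑ j, |δ * A j₀ j| := by
    simp only [key, apply_ite abs, abs_zero]
    rw [Finset.sum_comm]
    simp [Finset.sum_ite_eq']
  rw [hsum]
  have hcs : ∑ j, |A j₀ j| ≤ Real.sqrt k * Real.sqrt (∑ j, (A j₀ j) ^ 2) := by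
    have := Real.sum_mul_le_sqrt_mul_sqrt (Finset.univ : Finset (Fin k))
      (fun _ => (1 : ℝ)) (fun j => |A j₀ j|)
    simpa [sq_abs] using this
  have hsup : Real.sqrt (∑ j, (A j₀ j) ^ 2) ≤
      ⨆ i : Fin d, Real.sqrt (∑ j, (A i j) ^ 2) :=
    le_ciSup (f := fun i : Fin d => Real.sqrt (∑ j, (A i j) ^ 2))
      (Set.Finite.bddAbove (Set.finite_range _)) j₀
  calc ∑ j, |δ * A j₀ j| = |δ| * ∑ j, |A j₀ j| := by
        simp [abs_mul, Finset.mul_sum]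
    _ ≤ ∑ j, |A j₀ j| := by
        have h0 : (0:ℝ) ≤ ∑ j, |A j₀ j| := Finset.sum_nonneg fun _ _ => abs_nonneg _
        nlinarith
    _ ≤ Real.sqrt k * Real.sqrt (∑ j, (A j₀ j) ^ 2) := hcs
    _ ≤ Real.sqrt k * ⨆ i : Fin d, Real.sqrt (∑ j, (A i j) ^ 2) := by
        exact mul_le_mul_of_nonneg_left hsup (Real.sqrt_nonneg _)
end

section
/- Let X, X' be n×d matrices differing in exactly one entry with ‖X − X'‖₁ ≤ 1, let P be a d×k matrix with i.i.d. N(0, 1/k) entries, let Δ be an n×k matrix with i.i.d. Laplace(0, 2√k/ε) entries independent of P, and set Z = XP + Δ, Z' = X'P + Δ. Then with probability at least 1 − d·e^{−k/2} over the choice of P, for all measurable sets D we have both Pr[Z ∈ D | P] ≤ e^ε·Pr[Z' ∈ D | P] and Pr[Z' ∈ D | P] ≤ e^ε·Pr[Z ∈ D | P]. -/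
open MeasureTheory ProbabilityTheory

/-- The Laplace distribution with mean 0 and scale `b`, as a measure on `ℝ`. -/
noncomputable def laplace (b : ℝ) : Measure ℝ :=
  volume.withDensity fun x => ENNReal.ofReal ((2 * b)⁻¹ * Real.exp (-|x| / b))

/-!
Since `X` and `X'` differ only in column `j₀`, the means `XP` and `X'P` differ by
`(X - X')_{· j₀} ⊗ P_{j₀ ·}`, whose entrywise ℓ¹-norm is at most `∑ⱼ |P j₀ j|`. The Laplace
density `ρ` satisfies `ρ (y - t) ≤ exp (|t| / b) ρ y`, so by translation invariance of Lebesgue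
measure, shifting the mean of the product Laplace noise by `t` changes probabilities by at most
`exp (‖t‖₁ / b)`; with `b = 2√k / ε` this is `exp ε` as soon as `∑ⱼ |P j₀ j| ≤ 2√k`.
That event fails with probability at most `exp (-k / 2)` by a Chernoff bound:
`E exp (s |g|) ≤ 2 exp (v s² / 2)` for `g ~ N(0, v)`, and `s = 2√k`, `v = 1 / k` give
`(2 e²)ᵏ e^{-4k} ≤ e^{-k/2}`.
-/

open scoped ENNReal NNReal

theorem lintegral_fin_nat_prod_eq_prod :
    ∀ {m : ℕ} {α : Fin m → Type*} [∀ i, MeasurableSpace (α i)] (μ : ∀ i, Measure (α i))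
      [∀ i, SigmaFinite (μ i)] (f : ∀ i, α i → ℝ≥0∞), (∀ i, Measurable (f i)) →
      ∫⁻ x, ∏ i, f i (x i) ∂Measure.pi μ = ∏ i, ∫⁻ y, f i y ∂μ i
  | 0, _, _, μ, _, f, _ => by simp [Measure.pi_of_empty μ]
  | m + 1, α, _, μ, _, f, hf => by
    have htail : Measurable fun y : ∀ j : Fin m, α (Fin.succAbove 0 j) =>
        ∏ j, f (Fin.succAbove 0 j) (y j) :=
      Finset.measurable_prod _ fun j _ => (hf _).comp (measurable_pi_apply j)
    have hsplit : ∫⁻ x, f 0 (x 0) * ∏ j, f (Fin.succAbove 0 j) (x (Fin.succAbove 0 j))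
          ∂Measure.pi μ
        = ∫⁻ p, f 0 p.1 * ∏ j, f (Fin.succAbove 0 j) (p.2 j)
          ∂(μ 0).prod (Measure.pi fun j => μ (Fin.succAbove 0 j)) :=
      (measurePreserving_piFinSuccAbove μ 0).lintegral_comp
        (((hf 0).comp measurable_fst).mul (htail.comp measurable_snd))
    simp_rw [Fin.prod_univ_succAbove _ 0]
    rw [hsplit, lintegral_prod_mul (hf 0).aemeasurable htail.aemeasurable,
      lintegral_fin_nat_prod_eq_prod _ _ fun j => hf _]

theorem MeasureTheory.Measure.pi_fin_withDensity {m : ℕ} {α : Fin m → Type*} [∀ i, MeasurableSpace (α i)]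
    (μ : ∀ i, Measure (α i)) [∀ i, SigmaFinite (μ i)] (ρ : ∀ i, α i → ℝ≥0∞)
    (hρ : ∀ i, Measurable (ρ i)) [∀ i, SigmaFinite ((μ i).withDensity (ρ i))] :
    Measure.pi (fun i => (μ i).withDensity (ρ i))
      = (Measure.pi μ).withDensity fun x => ∏ i, ρ i (x i) := by
  refine Measure.pi_eq fun s hs => ?_
  have hind : (Set.univ.pi s).indicator (fun x => ∏ i, ρ i (x i))
      = fun x => ∏ i, (s i).indicator (ρ i) (x i) := by
    classical
    ext x
    simp only [Set.indicator, Set.mem_univ_pi, Finset.prod_ite_zero, Finset.mem_univ, true_imp_iff]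
  rw [withDensity_apply _ (MeasurableSet.univ_pi hs), ← lintegral_indicator (.univ_pi hs), hind,
    lintegral_fin_nat_prod_eq_prod μ _ fun i => (hρ i).indicator (hs i)]
  simp_rw [withDensity_apply _ (hs _), lintegral_indicator (hs _)]

theorem withDensity_preimage_add_left_le {G : Type*} [MeasurableSpace G] [AddGroup G]
    [MeasurableAdd G] (ν : Measure G) [ν.IsAddLeftInvariant] {f : G → ℝ≥0∞}
    (hf : Measurable f) {t : G} {c : ℝ≥0∞} (hshift : ∀ y, f (-t + y) ≤ c * f y) {D : Set G}
    (hD : MeasurableSet D) :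
    ν.withDensity f ((t + ·) ⁻¹' D) ≤ c * ν.withDensity f D := by
  rw [withDensity_apply _ hD, withDensity_apply _ (measurable_const_add t hD)]
  calc ∫⁻ x in (t + ·) ⁻¹' D, f x ∂ν
      = ∫⁻ y in D, f (-t + y) ∂ν := by
        simpa only [neg_add_cancel_left] using
          (measurePreserving_add_left ν t).setLIntegral_comp_preimage_emb
            (MeasurableEquiv.addLeft t).measurableEmbedding (fun y => f (-t + y)) D
    _ ≤ ∫⁻ y in D, c * f y ∂ν := lintegral_mono fun y => hshift y
    _ = c * ∫⁻ y in D, f y ∂ν := lintegral_const_mul c hf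

theorem one_sub_le_measure_of_measure_compl_le {α : Type*} [MeasurableSpace α]
    {μ : Measure α} [IsProbabilityMeasure μ] {s : Set α} {δ : ℝ≥0∞} (h : μ sᶜ ≤ δ) :
    1 - δ ≤ μ s := by
  rw [tsub_le_iff_right]
  calc 1 = μ (s ∪ sᶜ) := by rw [Set.union_compl_self, measure_univ]
    _ ≤ μ s + μ sᶜ := measure_union_le s sᶜ
    _ ≤ μ s + δ := by gcongr

noncomputable def laplacePDF (b x : ℝ) : ℝ≥0∞ :=
  ENNReal.ofReal ((2 * b)⁻¹ * Real.exp (-|x| / b))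

@[fun_prop]
theorem measurable_laplacePDF (b : ℝ) : Measurable (laplacePDF b) := by
  unfold laplacePDF; fun_prop

instance (b : ℝ) : SigmaFinite (laplace b) := by
  unfold laplace; infer_instance

section Laplace

variable {b : ℝ} {n k : ℕ}

theorem laplacePDF_neg_add_le (hb : 0 ≤ b) (t y : ℝ) :
    laplacePDF b (-t + y) ≤ ENNReal.ofReal (Real.exp (|t| / b)) * laplacePDF b y := by
  rw [laplacePDF, laplacePDF, ← ENNReal.ofReal_mul (Real.exp_nonneg _), mul_left_comm,
    ← Real.exp_add, ← add_div]
  gcongr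
  have := abs_add_le t (-t + y)
  rw [add_neg_cancel_left] at this
  linarith

theorem pi_pi_laplace_eq_withDensity :
    (Measure.pi fun _ : Fin n => Measure.pi fun _ : Fin k => laplace b)
      = volume.withDensity fun Δ : Fin n → Fin k → ℝ => ∏ i, ∏ j, laplacePDF b (Δ i j) := by
  have hrow : (Measure.pi fun _ : Fin k => laplace b)
      = volume.withDensity fun q : Fin k → ℝ => ∏ j, laplacePDF b (q j) :=
    Measure.pi_fin_withDensity _ _ fun _ => measurable_laplacePDF b
  have : SigmaFinite (volume.withDensity fun q : Fin k → ℝ => ∏ j, laplacePDF b (q j)) :=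
    hrow ▸ inferInstance
  simp_rw [hrow]
  exact Measure.pi_fin_withDensity _ _ fun _ => by fun_prop

theorem pi_pi_laplace_preimage_add_le (hb : 0 ≤ b) (M : Fin n → Fin k → ℝ)
    {D : Set (Fin n → Fin k → ℝ)} (hD : MeasurableSet D) :
    (Measure.pi fun _ : Fin n => Measure.pi fun _ : Fin k => laplace b) ((M + ·) ⁻¹' D)
      ≤ ENNReal.ofReal (Real.exp ((∑ i, ∑ j, |M i j|) / b)) *
        (Measure.pi fun _ : Fin n => Measure.pi fun _ : Fin k => laplace b) D := by
  rw [pi_pi_laplace_eq_withDensity]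
  refine withDensity_preimage_add_left_le _ (by fun_prop) (fun Δ => ?_) hD
  have hexp : ENNReal.ofReal (Real.exp ((∑ i, ∑ j, |M i j|) / b))
      = ∏ i, ∏ j, ENNReal.ofReal (Real.exp (|M i j| / b)) := by
    simp_rw [Finset.sum_div, Real.exp_sum]
    rw [ENNReal.ofReal_prod_of_nonneg fun i _ => by positivity]
    simp_rw [ENNReal.ofReal_prod_of_nonneg fun j _ => Real.exp_nonneg _]
  rw [hexp, ← Finset.prod_mul_distrib]
  refine Finset.prod_le_prod' fun i _ => ?_
  rw [← Finset.prod_mul_distrib]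
  exact Finset.prod_le_prod' fun j _ => laplacePDF_neg_add_le hb (M i j) (Δ i j)

theorem pi_pi_laplace_add_mem_le {ε : ℝ} (hb : 0 < b) {C C' : Fin n → Fin k → ℝ}
    (hCC' : ∑ i, ∑ j, |C i j - C' i j| ≤ ε * b) {D : Set (Fin n → Fin k → ℝ)}
    (hD : MeasurableSet D) :
    (Measure.pi fun _ : Fin n => Measure.pi fun _ : Fin k => laplace b) {Δ | C + Δ ∈ D}
      ≤ ENNReal.ofReal (Real.exp ε) *
        (Measure.pi fun _ : Fin n => Measure.pi fun _ : Fin k => laplace b)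
          {Δ | C' + Δ ∈ D} := by
  have hset : {Δ | C + Δ ∈ D} = (C - C' + ·) ⁻¹' {Δ | C' + Δ ∈ D} := by
    ext Δ
    simp [← add_assoc]
  have hD' : MeasurableSet {Δ | C' + Δ ∈ D} := measurable_const_add C' hD
  rw [hset]
  refine (pi_pi_laplace_preimage_add_le hb.le _ hD').trans ?_
  gcongr
  rw [div_le_iff₀ hb]
  exact hCC'

end Laplace

theorem lintegral_exp_mul_gaussianReal (v : ℝ≥0) (t : ℝ) :
    ∫⁻ x, ENNReal.ofReal (Real.exp (t * x)) ∂gaussianReal 0 v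
      = ENNReal.ofReal (Real.exp (v * t ^ 2 / 2)) := by
  rw [← ofReal_integral_eq_lintegral_ofReal (integrable_exp_mul_gaussianReal t)
    (.of_forall fun x => Real.exp_nonneg _)]
  change ENNReal.ofReal (mgf id (gaussianReal 0 v) t) = _
  simp only [mgf_id_gaussianReal, zero_mul, zero_add]

theorem lintegral_exp_mul_abs_gaussianReal_le (v : ℝ≥0) (s : ℝ) :
    ∫⁻ x, ENNReal.ofReal (Real.exp (s * |x|)) ∂gaussianReal 0 v
      ≤ 2 * ENNReal.ofReal (Real.exp (v * s ^ 2 / 2)) := by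
  have hsplit : ∀ x : ℝ, ENNReal.ofReal (Real.exp (s * |x|))
      ≤ ENNReal.ofReal (Real.exp (s * x)) + ENNReal.ofReal (Real.exp (-s * x)) := by
    intro x
    rw [← ENNReal.ofReal_add (Real.exp_nonneg _) (Real.exp_nonneg _)]
    gcongr
    rcases abs_cases x with ⟨hx, -⟩ | ⟨hx, -⟩ <;> rw [hx]
    · linarith [Real.exp_nonneg (-s * x)]
    · rw [mul_neg, ← neg_mul]; linarith [Real.exp_nonneg (s * x)]
  calc ∫⁻ x, ENNReal.ofReal (Real.exp (s * |x|)) ∂gaussianReal 0 v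
      ≤ ∫⁻ x, ENNReal.ofReal (Real.exp (s * x)) + ENNReal.ofReal (Real.exp (-s * x))
          ∂gaussianReal 0 v := lintegral_mono hsplit
    _ = 2 * ENNReal.ofReal (Real.exp (v * s ^ 2 / 2)) := by
      rw [lintegral_add_left (by fun_prop), lintegral_exp_mul_gaussianReal,
        lintegral_exp_mul_gaussianReal, neg_sq, two_mul]

theorem pi_gaussianReal_sum_abs_gt_le (k : ℕ) (v : ℝ≥0) {s : ℝ} (hs : 0 ≤ s) (a : ℝ) :
    (Measure.pi fun _ : Fin k => gaussianReal 0 v) {q | a < ∑ j, |q j|}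
      ≤ ENNReal.ofReal (Real.exp (-(s * a))) *
        (2 * ENNReal.ofReal (Real.exp (v * s ^ 2 / 2))) ^ k := by
  have hsub : {q : Fin k → ℝ | a < ∑ j, |q j|}
      ⊆ {q | ENNReal.ofReal (Real.exp (s * a)) ≤ ∏ j, ENNReal.ofReal (Real.exp (s * |q j|))} := by
    intro q hq
    rw [Set.mem_ofPred_eq, ← ENNReal.ofReal_prod_of_nonneg fun j _ => Real.exp_nonneg _,
      ← Real.exp_sum, ← Finset.mul_sum]
    gcongr
    exact hq.le
  have hmarkov := mul_meas_ge_le_lintegral (μ := Measure.pi fun _ : Fin k => gaussianReal 0 v)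
    (f := fun q => ∏ j, ENNReal.ofReal (Real.exp (s * |q j|))) (by fun_prop)
    (ENNReal.ofReal (Real.exp (s * a)))
  rw [lintegral_fin_nat_prod_eq_prod _ (fun _ x => ENNReal.ofReal (Real.exp (s * |x|)))
    fun _ => by fun_prop] at hmarkov
  have hinv : ENNReal.ofReal (Real.exp (-(s * a))) * ENNReal.ofReal (Real.exp (s * a)) = 1 := by
    rw [← ENNReal.ofReal_mul (Real.exp_nonneg _), ← Real.exp_add, neg_add_cancel, Real.exp_zero,
      ENNReal.ofReal_one]
  calc (Measure.pi fun _ : Fin k => gaussianReal 0 v) {q | a < ∑ j, |q j|}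
      ≤ ENNReal.ofReal (Real.exp (-(s * a))) * (ENNReal.ofReal (Real.exp (s * a)) *
          (Measure.pi fun _ : Fin k => gaussianReal 0 v)
            {q | ENNReal.ofReal (Real.exp (s * a)) ≤ ∏ j, ENNReal.ofReal (Real.exp (s * |q j|))}) := by
        rw [← mul_assoc, hinv, one_mul]
        exact measure_mono hsub
    _ ≤ ENNReal.ofReal (Real.exp (-(s * a))) *
          ∏ _ : Fin k, ∫⁻ x, ENNReal.ofReal (Real.exp (s * |x|)) ∂gaussianReal 0 v := by
        gcongr
    _ ≤ ENNReal.ofReal (Real.exp (-(s * a))) *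
        (2 * ENNReal.ofReal (Real.exp (v * s ^ 2 / 2))) ^ k := by
        rw [Finset.prod_const, Finset.card_univ, Fintype.card_fin]
        gcongr
        exact lintegral_exp_mul_abs_gaussianReal_le v s

theorem two_mul_exp_two_le_exp : 2 * Real.exp 2 ≤ Real.exp (7 / 2) := by
  have h : 2 ≤ Real.exp (3 / 2) := by linarith [Real.add_one_le_exp (3 / 2)]
  calc 2 * Real.exp 2 ≤ Real.exp (3 / 2) * Real.exp 2 := by gcongr
    _ = Real.exp (7 / 2) := by rw [← Real.exp_add]; norm_num

theorem pi_gaussianReal_sum_abs_gt_two_sqrt_le {k : ℕ} (hk : 0 < k) :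
    (Measure.pi fun _ : Fin k => gaussianReal 0 (1 / k)) {q | 2 * Real.sqrt k < ∑ j, |q j|}
      ≤ ENNReal.ofReal (Real.exp (-(k : ℝ) / 2)) := by
  have hk' : (0 : ℝ) < k := by exact_mod_cast hk
  have hsq : Real.sqrt k ^ 2 = k := Real.sq_sqrt hk'.le
  refine (pi_gaussianReal_sum_abs_gt_le k _ (by positivity : 0 ≤ 2 * Real.sqrt k) _).trans ?_
  have hchernoff : -(2 * Real.sqrt k * (2 * Real.sqrt k)) = -4 * k := by nlinarith
  have hvar : ((1 / k : ℝ≥0) : ℝ) * (2 * Real.sqrt k) ^ 2 / 2 = 2 := by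
    push_cast; field_simp; nlinarith
  rw [hchernoff, hvar, ← ENNReal.ofReal_ofNat 2, ← ENNReal.ofReal_mul zero_le_two,
    ← ENNReal.ofReal_pow (by positivity), ← ENNReal.ofReal_mul (Real.exp_nonneg _)]
  gcongr
  calc Real.exp (-4 * k) * (2 * Real.exp 2) ^ k ≤ Real.exp (-4 * k) * Real.exp (7 / 2) ^ k := by
        gcongr; exact two_mul_exp_two_le_exp
    _ = Real.exp (-(k : ℝ) / 2) := by
        rw [← Real.exp_nat_mul, ← Real.exp_add]; ring_nf

theorem Matrix.sum_abs_mul_sub_mul_le_of_eq_off_col {m n p : Type*} [Fintype m] [Fintype n]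
    [Fintype p] {X X' : Matrix m n ℝ} {l₀ : n} (hX : ∀ i l, l ≠ l₀ → X i l = X' i l)
    (P : Matrix n p ℝ) :
    ∑ i, ∑ j, |∑ l, X i l * P l j - ∑ l, X' i l * P l j|
      ≤ (∑ i, ∑ l, |X i l - X' i l|) * ∑ j, |P l₀ j| := by
  have hentry : ∀ i j,
      ∑ l, X i l * P l j - ∑ l, X' i l * P l j = (X i l₀ - X' i l₀) * P l₀ j := by
    intro i j
    rw [← Finset.sum_sub_distrib,
      Finset.sum_eq_single l₀ (fun l _ hl => by simp [hX i l hl]) (by simp), sub_mul]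
  simp_rw [hentry, abs_mul, ← Finset.mul_sum, ← Finset.sum_mul]
  gcongr with i
  exact Finset.single_le_sum (fun l _ => abs_nonneg (X i l - X' i l)) (Finset.mem_univ l₀)

theorem jl_laplace_mechanism_elementwise_privacy_general
    (n d k : ℕ) (hk : 0 < k) (ε : ℝ) (hε : 0 < ε)
    (X X' : Matrix (Fin n) (Fin d) ℝ)
    (hdiff : ∃ i₀ j₀, X i₀ j₀ ≠ X' i₀ j₀ ∧
      ∀ i j, (i, j) ≠ (i₀, j₀) → X i j = X' i j)
    (hl1 : ∑ i, ∑ j, |X i j - X' i j| ≤ 1) :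
    ENNReal.ofReal (1 - d * Real.exp (-(k : ℝ) / 2)) ≤
      (Measure.pi fun _ : Fin d => Measure.pi fun _ : Fin k => gaussianReal 0 (1 / k))
        {P | ∀ D : Set (Fin n → Fin k → ℝ), MeasurableSet D →
          ((Measure.pi fun _ : Fin n => Measure.pi fun _ : Fin k =>
              laplace (2 * Real.sqrt k / ε))
            {Δ | (fun i j => (∑ l, X i l * P l j) + Δ i j) ∈ D} ≤
            ENNReal.ofReal (Real.exp ε) *
              (Measure.pi fun _ : Fin n => Measure.pi fun _ : Fin k =>
                laplace (2 * Real.sqrt k / ε))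
                {Δ | (fun i j => (∑ l, X' i l * P l j) + Δ i j) ∈ D}) ∧
          ((Measure.pi fun _ : Fin n => Measure.pi fun _ : Fin k =>
              laplace (2 * Real.sqrt k / ε))
            {Δ | (fun i j => (∑ l, X' i l * P l j) + Δ i j) ∈ D} ≤
            ENNReal.ofReal (Real.exp ε) *
              (Measure.pi fun _ : Fin n => Measure.pi fun _ : Fin k =>
                laplace (2 * Real.sqrt k / ε))
                {Δ | (fun i j => (∑ l, X i l * P l j) + Δ i j) ∈ D})} := by
  obtain ⟨i₀, j₀, -, hX⟩ := hdiff
  have hcol : ∀ i l, l ≠ j₀ → X i l = X' i l := fun i l hl => hX i l (by simp [hl])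
  have hb : 0 < 2 * Real.sqrt k / ε := by positivity
  set good : Set (Fin d → Fin k → ℝ) := {P | ∑ j, |P j₀ j| ≤ 2 * Real.sqrt k}
  set μ := Measure.pi fun _ : Fin d => Measure.pi fun _ : Fin k => gaussianReal 0 (1 / k)
  have hbad : μ goodᶜ ≤ ENNReal.ofReal (Real.exp (-(k : ℝ) / 2)) := by
    have hcompl : goodᶜ = Function.eval j₀ ⁻¹' {q | 2 * Real.sqrt k < ∑ j, |q j|} := by
      ext P; simp [good]
    rw [hcompl, (measurePreserving_eval _ j₀).measure_preimage
      (measurableSet_lt measurable_const (by fun_prop)).nullMeasurableSet]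
    exact pi_gaussianReal_sum_abs_gt_two_sqrt_le hk
  refine le_trans ?_ (measure_mono (s := good) fun P hP D hD => ?_)
  · have hd : (1 : ℝ) ≤ d := by exact_mod_cast j₀.pos
    refine le_trans ?_ (one_sub_le_measure_of_measure_compl_le hbad)
    rw [← ENNReal.ofReal_one, ← ENNReal.ofReal_sub _ (Real.exp_nonneg _)]
    gcongr
    nlinarith [Real.exp_nonneg (-(k : ℝ) / 2)]
  have hsens : ∑ i, ∑ j, |∑ l, X i l * P l j - ∑ l, X' i l * P l j|
      ≤ ε * (2 * Real.sqrt k / ε) := by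
    calc _ ≤ (∑ i, ∑ l, |X i l - X' i l|) * ∑ j, |P j₀ j| :=
          Matrix.sum_abs_mul_sub_mul_le_of_eq_off_col hcol P
      _ ≤ 1 * (2 * Real.sqrt k) := by gcongr; exact hP
      _ = ε * (2 * Real.sqrt k / ε) := by field_simp
  exact ⟨pi_pi_laplace_add_mem_le hb hsens hD,
    pi_pi_laplace_add_mem_le hb (by simpa only [abs_sub_comm] using hsens) hD⟩

theorem jl_laplace_mechanism_elementwise_privacy
    (n d k : ℕ) (hn : 0 < n) (hd : 0 < d) (hk : 0 < k) (ε : ℝ) (hε : 0 < ε)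
    (X X' : Matrix (Fin n) (Fin d) ℝ)
    (hdiff : ∃ i₀ j₀, X i₀ j₀ ≠ X' i₀ j₀ ∧
      ∀ i j, (i, j) ≠ (i₀, j₀) → X i j = X' i j)
    (hl1 : ∑ i, ∑ j, |X i j - X' i j| ≤ 1) :
    ENNReal.ofReal (1 - d * Real.exp (-(k : ℝ) / 2)) ≤
      (Measure.pi fun _ : Fin d => Measure.pi fun _ : Fin k => gaussianReal 0 (1 / k))
        {P | ∀ D : Set (Fin n → Fin k → ℝ), MeasurableSet D →
          ((Measure.pi fun _ : Fin n => Measure.pi fun _ : Fin k =>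
              laplace (2 * Real.sqrt k / ε))
            {Δ | (fun i j => (∑ l, X i l * P l j) + Δ i j) ∈ D} ≤
            ENNReal.ofReal (Real.exp ε) *
              (Measure.pi fun _ : Fin n => Measure.pi fun _ : Fin k =>
                laplace (2 * Real.sqrt k / ε))
                {Δ | (fun i j => (∑ l, X' i l * P l j) + Δ i j) ∈ D}) ∧
          ((Measure.pi fun _ : Fin n => Measure.pi fun _ : Fin k =>
              laplace (2 * Real.sqrt k / ε))
            {Δ | (fun i j => (∑ l, X' i l * P l j) + Δ i j) ∈ D} ≤
            ENNReal.ofReal (Real.exp ε) *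
              (Measure.pi fun _ : Fin n => Measure.pi fun _ : Fin k =>
                laplace (2 * Real.sqrt k / ε))
                {Δ | (fun i j => (∑ l, X i l * P l j) + Δ i j) ∈ D})} :=
  jl_laplace_mechanism_elementwise_privacy_general n d k hk ε hε X X' hdiff hl1
end
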